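/- For a time-stamping tsm modulo M on a linear order, if a pair (u,v) with u ≤ v is tsm-big then dtsm+(u,v) = M. -/
import Mathlib


open Finset

/-- A weighted constraint edge: `ts tgt - ts src ◁ wt` where ◁ is `<` if `strict` else `≤`. -/
structure WEdge where
  src : ℕ
  strict : Bool
  wt : ℤ
  tgt : ℕ
deriving DecidableEq

/-- `ts` satisfies the constraint of edge `e`. -/
def satEdge (ts : ℕ → ℝ) (e : WEdge) : Prop :=
  if e.strict then ts e.tgt - ts e.src < (e.wt : ℝ) else ts e.tgt - ts e.src ≤ (e.wt : ℝ)

/-- `ts` realizes the linear weighted graph on vertices `{1,…,n}` with edge set `E`: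
monotone w.r.t. the linear order and all difference constraints hold. -/
def Realizes (n : ℕ) (E : Finset WEdge) (ts : ℕ → ℝ) : Prop :=
  (∀ u v : ℕ, 1 ≤ u → u ≤ v → v ≤ n → ts u ≤ ts v) ∧ ∀ e ∈ E, satEdge ts e

/-- Integer parts of consecutive time-stamps differ by at least 0 and at most `M - 1`. -/
def SlowlyMonotone (M : ℤ) (n : ℕ) (ts : ℕ → ℝ) : Prop :=
  ∀ i : ℕ, 1 ≤ i → i < n → 0 ≤ ⌊ts (i + 1)⌋ - ⌊ts i⌋ ∧ ⌊ts (i + 1)⌋ - ⌊ts i⌋ ≤ M - 1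

/-- All edges of the graph have endpoints in `{1,…,n}`. -/
def InGraph (n : ℕ) (E : Finset WEdge) : Prop :=
  ∀ e ∈ E, 1 ≤ e.src ∧ e.src ≤ n ∧ 1 ≤ e.tgt ∧ e.tgt ≤ n

/-- `M` weight-bounded: all weights have absolute value at most `M - 1`. -/
def WtBounded (M : ℤ) (E : Finset WEdge) : Prop := ∀ e ∈ E, |e.wt| ≤ M - 1

/-- `dtsm(u,v) = (tsm v - tsm u) mod M`. -/
def dtsm (M : ℤ) (tsm : ℕ → ℤ) (u v : ℕ) : ℤ := (tsm v - tsm u) % M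

/-- `dtsm⁺(u,v)`, for `u ≤ v`: the cumulative sum of consecutive `dtsm`'s, capped at `M`. -/
def dtsmP (M : ℤ) (tsm : ℕ → ℤ) (u v : ℕ) : ℤ :=
  min M (∑ i ∈ Finset.Ico u v, dtsm M tsm i (i + 1))

/-- Antisymmetric extension of `dtsm⁺` to arbitrary pairs. -/
def dtsmE (M : ℤ) (tsm : ℕ → ℤ) (u v : ℕ) : ℤ :=
  if u ≤ v then dtsmP M tsm u v else - dtsmP M tsm v u

/-- `(u,v)` is `tsm`-big. -/
def TsmBig (M : ℤ) (tsm : ℕ → ℤ) (u v : ℕ) : Prop :=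
  ∃ w1 w2 : ℕ, u ≤ w1 ∧ w1 < w2 ∧ w2 ≤ v ∧ M ≤ dtsm M tsm u w1 + dtsm M tsm w1 w2

/-- `tsm` is a time-stamping modulo `M` on vertices `{1,…,n}`. -/
def TSM (M : ℤ) (n : ℕ) (tsm : ℕ → ℤ) : Prop :=
  ∀ v, 1 ≤ v → v ≤ n → 0 ≤ tsm v ∧ tsm v < M

/-- `tsm` weakly satisfies the graph (forward/backward conditions). -/
def WeaklySat (M : ℤ) (E : Finset WEdge) (tsm : ℕ → ℤ) : Prop :=
  ∀ e ∈ E,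
    (e.src ≤ e.tgt → ¬ TsmBig M tsm e.src e.tgt ∧ dtsm M tsm e.src e.tgt ≤ e.wt) ∧
    (e.tgt < e.src → TsmBig M tsm e.tgt e.src ∨ - e.wt ≤ dtsm M tsm e.tgt e.src)

/-- `(u,v) ∈ geqFr`: fractional part of `ts u` must be ≥ that of `ts v`. -/
def geqFr (M : ℤ) (tsm : ℕ → ℤ) (E : Finset WEdge) (u v : ℕ) : Prop :=
  (∃ e ∈ E, e.src = u ∧ e.tgt = v ∧ dtsmE M tsm u v = e.wt) ∨
  (v + 1 = u ∧ dtsmE M tsm u v = 0)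

/-- `(u,v) ∈ gtFr`: fractional part of `ts u` must be > that of `ts v`. -/
def gtFr (M : ℤ) (tsm : ℕ → ℤ) (E : Finset WEdge) (u v : ℕ) : Prop :=
  ∃ e ∈ E, e.strict = true ∧ e.src = u ∧ e.tgt = v ∧ dtsmE M tsm u v = e.wt

open Classical in
/-- Number of `gtFr` edges used by the path `p 0, p 1, …, p k`. -/
noncomputable def gtCount (M : ℤ) (tsm : ℕ → ℤ) (E : Finset WEdge) (k : ℕ) (p : ℕ → ℕ) : ℕ :=
  ((Finset.range k).filter (fun i => gtFr M tsm E (p i) (p (i + 1)))).card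


lemma sum_dtsm_nonneg (M : ℤ) (hM : 1 ≤ M) (tsm : ℕ → ℤ) (a b : ℕ) :
    0 ≤ ∑ i ∈ Finset.Ico a b, dtsm M tsm i (i + 1) :=
  Finset.sum_nonneg fun i _ => Int.emod_nonneg _ (by omega)

lemma dtsm_le_sum (M : ℤ) (hM : 1 ≤ M) (tsm : ℕ → ℤ) (a b : ℕ) (hab : a ≤ b) :
    dtsm M tsm a b ≤ ∑ i ∈ Finset.Ico a b, dtsm M tsm i (i + 1) := by
  set S := ∑ i ∈ Finset.Ico a b, dtsm M tsm i (i + 1) with hS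
  have hmod : S % M = dtsm M tsm a b := by
    have h1 : S % M = (∑ i ∈ Finset.Ico a b, (tsm (i + 1) - tsm i)) % M := by
      rw [hS]
      rw [Finset.sum_int_mod _ M (fun i => tsm (i + 1) - tsm i)]
      simp [dtsm, Int.emod_emod_of_dvd]
    have h2 : ∑ i ∈ Finset.Ico a b, (tsm (i + 1) - tsm i) = tsm b - tsm a := by
      rw [Finset.sum_Ico_eq_sub _ hab, Finset.sum_range_sub, Finset.sum_range_sub]
      ring
    rw [h1, h2]; rfl
  have hSnn : 0 ≤ S := sum_dtsm_nonneg M hM tsm a b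
  have := Int.emod_nonneg S (show M ≠ 0 by omega)
  have := Int.emod_lt_of_pos S (show 0 < M by omega)
  rcases lt_or_ge S M with h | h
  · rw [← hmod, Int.emod_eq_of_lt hSnn h]
  · omega

theorem tsmBig_implies_dtsmP_eq_top (M : ℤ) (hM : 1 ≤ M) (n : ℕ) (tsm : ℕ → ℤ)
    (hT : TSM M n tsm) (u v : ℕ) (huv : u ≤ v) (hbig : TsmBig M tsm u v) :
    dtsmP M tsm u v = M := by
  obtain ⟨w1, w2, h1, h2, h3, h4⟩ := hbig
  have key : M ≤ ∑ i ∈ Finset.Ico u v, dtsm M tsm i (i + 1) := by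
    have e1 : ∑ i ∈ Finset.Ico u v, dtsm M tsm i (i + 1) =
        (∑ i ∈ Finset.Ico u w1, dtsm M tsm i (i + 1)) +
        ((∑ i ∈ Finset.Ico w1 w2, dtsm M tsm i (i + 1)) +
         (∑ i ∈ Finset.Ico w2 v, dtsm M tsm i (i + 1))) := by
      rw [Finset.sum_Ico_consecutive _ h2.le h3, Finset.sum_Ico_consecutive _ h1 (h2.le.trans h3)]
    have a1 := dtsm_le_sum M hM tsm u w1 h1
    have a2 := dtsm_le_sum M hM tsm w1 w2 h2.le
    have a3 := sum_dtsm_nonneg M hM tsm w2 v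
    omega
  simp [dtsmP, min_eq_left key]
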